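/- arXiv:1105.1475 — 4 statements merged into one kernel-verified Lean document; each statement's English description precedes it below -/
import Mathlib

section
/- (Lemma 2, invariance under repeated regressors.) Consider the augmented design in ℝ^{2p} obtained by duplicating every regressor: x̃_i = (x_i, x_i) ∈ ℝ^{2p}, loadings γ̃_j = γ_j and γ̃_{p+j} = γ_j for j = 1,…,p, target β̃₀ = (β₀, 0) ∈ ℝ^{2p} with support T̃ = T (viewed inside the first block of coordinates, so |T̃| = s). Then the quantity κ̃ computed for the augmented design (x̃_i, Γ̃, T̃) equals the quantity κ̃ computed for the original design (x_i, Γ, T). -/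
open Finset MeasureTheory ProbabilityTheory

namespace SqrtLasso

/-- Empirical average `E_n[h_i] = n⁻¹ ∑ᵢ h i`. -/
noncomputable def En (n : ℕ) (h : Fin n → ℝ) : ℝ := (∑ i, h i) / n

/-- Euclidean inner product `a'b = ∑ⱼ aⱼ bⱼ`. -/
noncomputable def dot {p : ℕ} (a b : Fin p → ℝ) : ℝ := ∑ j, a j * b j

/-- Prediction norm `‖δ‖_{2,n} = (E_n[(x_i'δ)²])^{1/2}`. -/
noncomputable def predNorm (n : ℕ) {p : ℕ} (x : Fin n → Fin p → ℝ) (δ : Fin p → ℝ) : ℝ :=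
  Real.sqrt (En n fun i => (dot (x i) δ) ^ 2)

/-- `ℓ₁` norm of a vector. -/
noncomputable def l1 {p : ℕ} (v : Fin p → ℝ) : ℝ := ∑ j, |v j|

/-- Restriction `v_S`: equal to `v` on `S` and `0` outside. -/
def restr {p : ℕ} (S : Finset (Fin p)) (v : Fin p → ℝ) : Fin p → ℝ :=
  fun j => if j ∈ S then v j else 0

/-- `Γ v`, i.e. componentwise rescaling by loadings `γ`. -/
noncomputable def scl {p : ℕ} (γ v : Fin p → ℝ) : Fin p → ℝ := fun j => γ j * v j

/-- The support of a vector. -/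
noncomputable def supp {p : ℕ} (β : Fin p → ℝ) : Finset (Fin p) := Finset.univ.filter fun j => β j ≠ 0

/-- The least-squares criterion `Q̂(β) = E_n[(y_i - x_i'β)²]`. -/
noncomputable def Qhat (n : ℕ) {p : ℕ} (x : Fin n → Fin p → ℝ) (y : Fin n → ℝ)
    (β : Fin p → ℝ) : ℝ := En n fun i => (y i - dot (x i) β) ^ 2

/-- The restricted set `Δ_c̄`. -/
def Delta {p : ℕ} (γ : Fin p → ℝ) (T : Finset (Fin p)) (cb : ℝ) : Set (Fin p → ℝ) :=
  {δ | δ ≠ 0 ∧ l1 (scl γ (restr Tᶜ δ)) ≤ cb * l1 (scl γ (restr T δ))}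

/-- The restricted eigenvalue `κ_c̄`. -/
noncomputable def kappa (n : ℕ) {p : ℕ} (x : Fin n → Fin p → ℝ) (γ : Fin p → ℝ)
    (T : Finset (Fin p)) (cb : ℝ) : ℝ :=
  sInf {r | ∃ δ ∈ Delta γ T cb,
    r = Real.sqrt T.card * predNorm n x δ / l1 (scl γ (restr T δ))}

/-- The quantity `κ̃`. -/
noncomputable def kappaTilde (n : ℕ) {p : ℕ} (x : Fin n → Fin p → ℝ) (γ : Fin p → ℝ)
    (T : Finset (Fin p)) : ℝ :=
  sInf {r | ∃ δ : Fin p → ℝ, l1 (scl γ (restr Tᶜ δ)) < l1 (scl γ (restr T δ)) ∧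
    r = Real.sqrt T.card * predNorm n x δ /
      (l1 (scl γ (restr T δ)) - l1 (scl γ (restr Tᶜ δ)))}

/-- The score `S̃ = E_n[x_i(σε_i + r_i)] / √(E_n[(σε_i + r_i)²])`. -/
noncomputable def score (n : ℕ) {p : ℕ} (x : Fin n → Fin p → ℝ) (ε rr : Fin n → ℝ)
    (σ : ℝ) : Fin p → ℝ :=
  fun j => En n (fun i => x i j * (σ * ε i + rr i)) /
    Real.sqrt (En n fun i => (σ * ε i + rr i) ^ 2)

/-- `‖Γ⁻¹ S̃‖_∞ = max_j |S̃_j| / γ_j`. -/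
noncomputable def scoreSup (n : ℕ) {p : ℕ} (x : Fin n → Fin p → ℝ) (ε rr : Fin n → ℝ)
    (σ : ℝ) (γ : Fin p → ℝ) : ℝ :=
  ⨆ j, |score n x ε rr σ j| / γ j

/-- The quantity `ϱ_c̄`. -/
noncomputable def varrho (n : ℕ) {p : ℕ} (x : Fin n → Fin p → ℝ) (γ : Fin p → ℝ)
    (T : Finset (Fin p)) (β₀ : Fin p → ℝ) (S : Fin p → ℝ) (cb : ℝ) : ℝ :=
  sSup {r | ∃ δ ∈ Delta γ T cb, 0 < predNorm n x δ ∧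
    l1 (scl γ (δ + β₀)) ≤ cb * l1 (scl γ β₀) ∧ r = |dot S δ| / predNorm n x δ}

/-- Quadratic form `δ'Mδ`. -/
noncomputable def quadForm {p : ℕ} (M : Fin p → Fin p → ℝ) (δ : Fin p → ℝ) : ℝ :=
  ∑ j, ∑ k, δ j * M j k * δ k

/-- Maximal `m`-sparse eigenvalue `φ_max(m, M)`. -/
noncomputable def phiMax {p : ℕ} (M : Fin p → Fin p → ℝ) (T : Finset (Fin p)) (m : ℕ) : ℝ :=
  sSup {r | ∃ δ : Fin p → ℝ, δ ≠ 0 ∧ (supp δ \ T).card ≤ m ∧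
    r = quadForm M δ / ∑ j, (δ j) ^ 2}

/-- Minimal `m`-sparse eigenvalue `φ_min(m, M)`. -/
noncomputable def phiMin {p : ℕ} (M : Fin p → Fin p → ℝ) (T : Finset (Fin p)) (m : ℕ) : ℝ :=
  sInf {r | ∃ δ : Fin p → ℝ, δ ≠ 0 ∧ (supp δ \ T).card ≤ m ∧
    r = quadForm M δ / ∑ j, (δ j) ^ 2}

/-- Gram matrix `E_n[x_i x_i']`. -/
noncomputable def gram (n : ℕ) {p : ℕ} (x : Fin n → Fin p → ℝ) : Fin p → Fin p → ℝ :=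
  fun j k => En n fun i => x i j * x i k

/-- Rescaled Gram matrix `Γ⁻¹ E_n[x_i x_i'] Γ⁻¹`. -/
noncomputable def rgram (n : ℕ) {p : ℕ} (x : Fin n → Fin p → ℝ) (γ : Fin p → ℝ) :
    Fin p → Fin p → ℝ :=
  fun j k => gram n x j k / (γ j * γ k)

lemma sum_split (p : ℕ) (f : Fin (p + p) → ℝ) :
    ∑ j, f j = (∑ k : Fin p, f (finSumFinEquiv (Sum.inl k))) +
      ∑ k : Fin p, f (finSumFinEquiv (Sum.inr k)) := by
  rw [← Equiv.sum_comp finSumFinEquiv f]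
  exact Fintype.sum_sum_type _

/-- `κ̃` is invariant under duplicating every regressor (with the same loadings),
where the augmented target is `β̃₀ = (β₀, 0)`. -/
theorem statement_2 (n p : ℕ) (hn : 1 ≤ n) (hp : 1 ≤ p)
    (x : Fin n → Fin p → ℝ) (β₀ γ : Fin p → ℝ) (hγ : ∀ j, 1 ≤ γ j)
    (hs : 1 ≤ (supp β₀).card)
    (xa : Fin n → Fin (p + p) → ℝ) (γa β₀a : Fin (p + p) → ℝ)
    (hxa : ∀ i j, xa i j = Sum.elim (x i) (x i) (finSumFinEquiv.symm j))
    (hγa : ∀ j, γa j = Sum.elim γ γ (finSumFinEquiv.symm j))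
    (hβa : ∀ j, β₀a j = Sum.elim β₀ (fun _ => (0 : ℝ)) (finSumFinEquiv.symm j)) :
    kappaTilde n xa γa (supp β₀a) = kappaTilde n x γ (supp β₀) := by
  classical
  set e := (finSumFinEquiv : Fin p ⊕ Fin p ≃ Fin (p + p)) with he
  set T := supp β₀ with hT
  set Ta := supp β₀a with hTa
  -- membership facts
  have hβL : ∀ k : Fin p, β₀a (e (Sum.inl k)) = β₀ k := by
    intro k; rw [hβa, Equiv.symm_apply_apply, Sum.elim_inl]
  have hβR : ∀ k : Fin p, β₀a (e (Sum.inr k)) = 0 := by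
    intro k; rw [hβa, Equiv.symm_apply_apply, Sum.elim_inr]
  have hmemL : ∀ k : Fin p, e (Sum.inl k) ∈ Ta ↔ k ∈ T := by
    intro k
    rw [hTa, hT]
    simp only [supp, Finset.mem_filter, Finset.mem_univ, true_and]
    rw [hβL k]
  have hmemR : ∀ k : Fin p, e (Sum.inr k) ∉ Ta := by
    intro k
    rw [hTa]
    simp only [supp, Finset.mem_filter, Finset.mem_univ, true_and]
    exact fun h => h (hβR k)
  have hcard : Ta.card = T.card := by
    have hmap : Ta = T.map ⟨fun k => e (Sum.inl k),
        fun a b h => Sum.inl.inj (e.injective h)⟩ := by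
      ext j
      obtain ⟨s, rfl⟩ := e.surjective j
      cases s with
      | inl k =>
        constructor
        · intro h
          exact Finset.mem_map.mpr ⟨k, (hmemL k).mp h, rfl⟩
        · intro h
          obtain ⟨a, ha, hak⟩ := Finset.mem_map.mp h
          obtain rfl := Sum.inl.inj (e.injective hak)
          exact (hmemL a).mpr ha
      | inr k =>
        constructor
        · intro h; exact absurd h (hmemR k)
        · intro h
          obtain ⟨a, ha, hak⟩ := Finset.mem_map.mp h
          exact absurd (e.injective hak) Sum.inl_ne_inr
    rw [hmap, Finset.card_map]
  have hγL : ∀ k : Fin p, γa (e (Sum.inl k)) = γ k := by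
    intro k; rw [hγa, Equiv.symm_apply_apply, Sum.elim_inl]
  have hγR : ∀ k : Fin p, γa (e (Sum.inr k)) = γ k := by
    intro k; rw [hγa, Equiv.symm_apply_apply, Sum.elim_inr]
  -- ℓ1 decomposition facts
  have hLT : ∀ v : Fin (p + p) → ℝ,
      l1 (scl γa (restr Ta v)) = l1 (scl γ (restr T fun k => v (e (Sum.inl k)))) := by
    intro v
    simp only [l1, scl, restr]
    rw [sum_split]
    have h2 : (∑ k : Fin p,
        |γa (e (Sum.inr k)) * (if e (Sum.inr k) ∈ Ta then v (e (Sum.inr k)) else 0)|) = 0 := by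
      apply Finset.sum_eq_zero
      intro k _
      simp [hmemR k]
    rw [h2, add_zero]
    apply Finset.sum_congr rfl
    intro k _
    rw [hγL k, if_congr (hmemL k) rfl rfl]
  have hLTc : ∀ v : Fin (p + p) → ℝ,
      l1 (scl γa (restr Taᶜ v)) = l1 (scl γ (restr Tᶜ fun k => v (e (Sum.inl k)))) +
        l1 (scl γ fun k => v (e (Sum.inr k))) := by
    intro v
    simp only [l1, scl, restr]
    rw [sum_split]
    congr 1
    · apply Finset.sum_congr rfl
      intro k _
      have hcomp : e (Sum.inl k) ∈ Taᶜ ↔ k ∈ Tᶜ := by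
        rw [Finset.mem_compl, Finset.mem_compl]
        exact not_congr (hmemL k)
      rw [hγL k, if_congr hcomp rfl rfl]
    · apply Finset.sum_congr rfl
      intro k _
      rw [hγR k, if_pos (Finset.mem_compl.mpr (hmemR k))]
  -- prediction norm fact
  have hpred : ∀ v : Fin (p + p) → ℝ,
      predNorm n xa v = predNorm n x (fun k => v (e (Sum.inl k)) + v (e (Sum.inr k))) := by
    intro v
    have hdot : ∀ i, dot (xa i) v =
        dot (x i) (fun k => v (e (Sum.inl k)) + v (e (Sum.inr k))) := by
      intro i
      simp only [dot]
      rw [sum_split, ← Finset.sum_add_distrib]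
      apply Finset.sum_congr rfl
      intro k _
      rw [hxa, hxa, Equiv.symm_apply_apply, Equiv.symm_apply_apply]
      simp only [Sum.elim_inl, Sum.elim_inr]
      ring
    simp only [predNorm, En, hdot]
  have hpn : ∀ {q : ℕ} (z : Fin n → Fin q → ℝ) (d : Fin q → ℝ), 0 ≤ predNorm n z d :=
    fun z d => Real.sqrt_nonneg _
  -- embedding computation
  have hembed : ∀ δ : Fin p → ℝ,
      l1 (scl γa (restr Taᶜ (fun j => Sum.elim δ (fun _ => (0:ℝ)) (e.symm j)))) =
        l1 (scl γ (restr Tᶜ δ)) ∧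
      l1 (scl γa (restr Ta (fun j => Sum.elim δ (fun _ => (0:ℝ)) (e.symm j)))) =
        l1 (scl γ (restr T δ)) ∧
      predNorm n xa (fun j => Sum.elim δ (fun _ => (0:ℝ)) (e.symm j)) = predNorm n x δ := by
    intro δ
    set δt : Fin (p + p) → ℝ := fun j => Sum.elim δ (fun _ => (0:ℝ)) (e.symm j) with hδt
    have hv1 : (fun k => δt (e (Sum.inl k))) = δ := by
      funext k
      simp only [hδt, Equiv.symm_apply_apply, Sum.elim_inl]
    have hv2 : (fun k => δt (e (Sum.inr k))) = fun _ => (0:ℝ) := by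
      funext k
      simp only [hδt, Equiv.symm_apply_apply, Sum.elim_inr]
    refine ⟨?_, ?_, ?_⟩
    · rw [hLTc δt, hv1, hv2]
      have : l1 (scl γ (fun _ => (0:ℝ))) = 0 := by simp [l1, scl]
      rw [this, add_zero]
    · rw [hLT δt, hv1]
    · rw [hpred δt]
      have : (fun k => δt (e (Sum.inl k)) + δt (e (Sum.inr k))) = δ := by
        funext k
        simp only [hδt, Equiv.symm_apply_apply, Sum.elim_inl, Sum.elim_inr, add_zero]
      rw [this]
  -- boundedness below
  have hBdd : ∀ {q : ℕ} (z : Fin n → Fin q → ℝ) (g : Fin q → ℝ) (S : Finset (Fin q)),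
      BddBelow {r | ∃ δ : Fin q → ℝ, l1 (scl g (restr Sᶜ δ)) < l1 (scl g (restr S δ)) ∧
        r = Real.sqrt S.card * predNorm n z δ /
          (l1 (scl g (restr S δ)) - l1 (scl g (restr Sᶜ δ)))} := by
    intro q z g S
    refine ⟨0, ?_⟩
    rintro r ⟨δ, hlt, rfl⟩
    have hd := sub_pos.mpr hlt
    exact div_nonneg (mul_nonneg (Real.sqrt_nonneg _) (hpn z δ)) hd.le
  -- nonemptiness of the original-design set
  obtain ⟨j0, hj0⟩ := Finset.card_pos.mp hs
  have hγj0 : (0:ℝ) < γ j0 := lt_of_lt_of_le one_pos (hγ j0)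
  set δ0 : Fin p → ℝ := fun k => if k = j0 then (1:ℝ) else 0 with hδ0
  have hδ0c : l1 (scl γ (restr Tᶜ δ0)) = 0 := by
    simp only [l1, scl, restr]
    apply Finset.sum_eq_zero
    intro k _
    by_cases h : k = j0
    · subst h; simp [Finset.mem_compl, hj0]
    · simp [hδ0, h]
  have hδ0T : l1 (scl γ (restr T δ0)) = γ j0 := by
    simp only [l1, scl, restr]
    rw [Finset.sum_eq_single j0]
    · simp [hδ0, hj0, abs_of_pos hγj0]
    · intro k _ hk; simp [hδ0, hk]
    · intro h; exact absurd (Finset.mem_univ j0) h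
  have hδ0lt : l1 (scl γ (restr Tᶜ δ0)) < l1 (scl γ (restr T δ0)) := by
    rw [hδ0c, hδ0T]; exact hγj0
  have hNeB : Set.Nonempty {r | ∃ δ : Fin p → ℝ,
      l1 (scl γ (restr Tᶜ δ)) < l1 (scl γ (restr T δ)) ∧
      r = Real.sqrt T.card * predNorm n x δ /
        (l1 (scl γ (restr T δ)) - l1 (scl γ (restr Tᶜ δ)))} :=
    ⟨_, δ0, hδ0lt, rfl⟩
  unfold kappaTilde
  apply le_antisymm
  · -- sInf A ≤ sInf B via B ⊆ A (embedding)
    apply csInf_le_csInf (hBdd xa γa Ta) hNeB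
    rintro r ⟨δ, hlt, rfl⟩
    obtain ⟨e1, e2, e3⟩ := hembed δ
    refine ⟨fun j => Sum.elim δ (fun _ => (0:ℝ)) (e.symm j), ?_, ?_⟩
    · rw [e1, e2]; exact hlt
    · rw [e1, e2, e3, hcard]
  · -- sInf B ≤ sInf A
    have hNeA : Set.Nonempty {r | ∃ δ : Fin (p + p) → ℝ,
        l1 (scl γa (restr Taᶜ δ)) < l1 (scl γa (restr Ta δ)) ∧
        r = Real.sqrt Ta.card * predNorm n xa δ /
          (l1 (scl γa (restr Ta δ)) - l1 (scl γa (restr Taᶜ δ)))} := by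
      obtain ⟨e1, e2, e3⟩ := hembed δ0
      refine ⟨_, fun j => Sum.elim δ0 (fun _ => (0:ℝ)) (e.symm j), ?_, rfl⟩
      rw [e1, e2]; exact hδ0lt
    apply le_csInf hNeA
    rintro r ⟨δ, hlt, rfl⟩
    rw [hLT δ, hLTc δ] at hlt
    rw [hLT δ, hLTc δ, hpred δ, hcard]
    set d1 : Fin p → ℝ := fun k => δ (e (Sum.inl k)) with hd1
    set d2 : Fin p → ℝ := fun k => δ (e (Sum.inr k)) with hd2
    have hfun : (fun k => δ (e (Sum.inl k)) + δ (e (Sum.inr k))) = d1 + d2 := by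
      funext k; rfl
    rw [hfun]
    have hLall : l1 (scl γ d2) = l1 (scl γ (restr T d2)) + l1 (scl γ (restr Tᶜ d2)) := by
      simp only [l1, scl, restr, ← Finset.sum_add_distrib]
      apply Finset.sum_congr rfl
      intro k _
      by_cases h : k ∈ T <;> simp [h, Finset.mem_compl]
    have h1 : l1 (scl γ (restr T d1)) - l1 (scl γ (restr T d2)) ≤
        l1 (scl γ (restr T (d1 + d2))) := by
      simp only [l1, scl, restr, ← Finset.sum_sub_distrib]
      apply Finset.sum_le_sum
      intro k _
      by_cases h : k ∈ T
      · simp only [h, if_true, Pi.add_apply, mul_add]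
        simpa using abs_sub_abs_le_abs_sub (γ k * d1 k) (-(γ k * d2 k))
      · simp [h]
    have h2 : l1 (scl γ (restr Tᶜ (d1 + d2))) ≤
        l1 (scl γ (restr Tᶜ d1)) + l1 (scl γ (restr Tᶜ d2)) := by
      simp only [l1, scl, restr, ← Finset.sum_add_distrib]
      apply Finset.sum_le_sum
      intro k _
      by_cases h : k ∈ Tᶜ
      · simp only [h, if_true, Pi.add_apply, mul_add]
        exact abs_add_le _ _
      · simp [h]
    have hpos : 0 < l1 (scl γ (restr T d1)) -
        (l1 (scl γ (restr Tᶜ d1)) + l1 (scl γ d2)) := sub_pos.mpr hlt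
    have hden : l1 (scl γ (restr T d1)) - (l1 (scl γ (restr Tᶜ d1)) + l1 (scl γ d2)) ≤
        l1 (scl γ (restr T (d1 + d2))) - l1 (scl γ (restr Tᶜ (d1 + d2))) := by
      rw [hLall] at hpos ⊢
      linarith
    have hltnew : l1 (scl γ (restr Tᶜ (d1 + d2))) < l1 (scl γ (restr T (d1 + d2))) := by
      linarith
    refine le_trans (csInf_le (hBdd x γ T) ⟨d1 + d2, hltnew, rfl⟩) ?_
    gcongr
    exact mul_nonneg (Real.sqrt_nonneg _) (hpn x (d1 + d2))
end SqrtLasso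
end

section
/- (Lemma 4, domination.) Suppose that for some c > 1 one has λ/n ≥ c‖Γ⁻¹S̃‖_∞, and set c̄ = (c+1)/(c−1). Then any square-root lasso minimizer β̂ satisfies ‖Γβ̂_{T^c}‖₁ ≤ c̄‖Γ(β̂_T − β₀)‖₁ and ‖Γβ̂‖₁ ≤ c̄‖Γβ₀‖₁. -/
open Finset MeasureTheory ProbabilityTheory

namespace SqrtLasso

-- Auxiliary lemmas

lemma En_CS (n : ℕ) (hn : (0:ℝ) < n) (f g : Fin n → ℝ) :
    En n (fun i => f i * g i) ≤
      Real.sqrt (En n fun i => f i ^ 2) * Real.sqrt (En n fun i => g i ^ 2) := by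
  unfold En
  have h1 : Real.sqrt ((∑ i, f i ^ 2) / n) * Real.sqrt ((∑ i, g i ^ 2) / n)
      = Real.sqrt (∑ i, f i ^ 2) * Real.sqrt (∑ i, g i ^ 2) / n := by
    rw [Real.sqrt_div (by positivity), Real.sqrt_div (by positivity),
      div_mul_div_comm, Real.mul_self_sqrt hn.le]
  rw [h1]
  gcongr
  exact Real.sum_mul_le_sqrt_mul_sqrt _ f g

lemma dot_score_eq (n p : ℕ) (x : Fin n → Fin p → ℝ) (ε rr : Fin n → ℝ) (σ : ℝ)
    (δ : Fin p → ℝ) :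
    dot (score n x ε rr σ) δ =
      (En n fun i => (σ * ε i + rr i) * dot (x i) δ) /
        Real.sqrt (En n fun i => (σ * ε i + rr i) ^ 2) := by
  unfold dot score En
  simp only [div_div, div_mul_eq_mul_div, ← Finset.sum_div]
  congr 1
  have h1 : ∀ j : Fin p, (∑ i, x i j * (σ * ε i + rr i)) * δ j
      = ∑ i, (σ * ε i + rr i) * (x i j * δ j) := by
    intro j
    rw [Finset.sum_mul]
    exact Finset.sum_congr rfl fun i _ => by ring
  simp_rw [h1]
  rw [Finset.sum_comm]
  refine Finset.sum_congr rfl fun i _ => ?_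
  rw [Finset.mul_sum]

lemma l1_scl_restr {p : ℕ} (γ : Fin p → ℝ) (S : Finset (Fin p)) (v : Fin p → ℝ) :
    l1 (scl γ (restr S v)) = ∑ j ∈ S, |γ j * v j| := by
  unfold l1 scl restr
  have : ∀ j : Fin p, |γ j * (if j ∈ S then v j else 0)| = if j ∈ S then |γ j * v j| else 0 := by
    intro j
    by_cases h : j ∈ S <;> simp [h]
  simp_rw [this]
  rw [Finset.sum_ite_mem, Finset.univ_inter]

/-- Lemma 4, domination: if `λ/n ≥ c ‖Γ⁻¹S̃‖_∞` with `c > 1` and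
`c̄ = (c+1)/(c-1)`, then `‖Γβ̂_{T^c}‖₁ ≤ c̄ ‖Γ(β̂_T - β₀)‖₁` and `‖Γβ̂‖₁ ≤ c̄ ‖Γβ₀‖₁`. -/
theorem statement_4 (n p : ℕ) (hn : 1 ≤ n) (hp : 1 ≤ p)
    (x : Fin n → Fin p → ℝ) (β₀ γ : Fin p → ℝ) (hγ : ∀ j, 1 ≤ γ j)
    (hs : 1 ≤ (supp β₀).card)
    (σ : ℝ) (hσ : 0 ≤ σ) (ε rr : Fin n → ℝ) (y : Fin n → ℝ)
    (hy : ∀ i, y i = dot (x i) β₀ + σ * ε i + rr i)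
    (hQ : 0 < En n fun i => (σ * ε i + rr i) ^ 2)
    (lam : ℝ) (hlam : 0 < lam)
    (c : ℝ) (hc : 1 < c)
    (hdom : c * scoreSup n x ε rr σ γ ≤ lam / n)
    (βh : Fin p → ℝ)
    (hmin : ∀ β : Fin p → ℝ,
      Real.sqrt (Qhat n x y βh) + lam / n * l1 (scl γ βh) ≤
        Real.sqrt (Qhat n x y β) + lam / n * l1 (scl γ β)) :
    l1 (scl γ (restr (supp β₀)ᶜ βh)) ≤
        (c + 1) / (c - 1) * l1 (scl γ (restr (supp β₀) βh - β₀)) ∧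
      l1 (scl γ βh) ≤ (c + 1) / (c - 1) * l1 (scl γ β₀) := by
  classical
  set T := supp β₀ with hT
  set δ : Fin p → ℝ := fun j => βh j - β₀ j with hδ
  have hn' : (0:ℝ) < n := by exact_mod_cast Nat.lt_of_lt_of_le Nat.zero_lt_one hn
  have hc0 : (0:ℝ) < c := lt_trans one_pos hc
  have hγ0 : ∀ j, (0:ℝ) < γ j := fun j => lt_of_lt_of_le one_pos (hγ j)
  have hL : 0 < lam / n := div_pos hlam hn'
  have hβ₀0 : ∀ j, j ∉ T → β₀ j = 0 := by
    intro j hj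
    by_contra h
    exact hj (Finset.mem_filter.mpr ⟨Finset.mem_univ j, h⟩)
  -- rewriting Qhat
  have hdot_split : ∀ i, dot (x i) βh = dot (x i) β₀ + dot (x i) δ := by
    intro i
    unfold dot
    rw [← Finset.sum_add_distrib]
    exact Finset.sum_congr rfl fun j _ => by simp only [hδ]; ring
  have hQ0 : Qhat n x y β₀ = En n fun i => (σ * ε i + rr i) ^ 2 := by
    unfold Qhat
    congr 1
    funext i
    rw [hy i]; ring
  have hQh : Qhat n x y βh = En n fun i => ((σ * ε i + rr i) - dot (x i) δ) ^ 2 := by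
    unfold Qhat
    congr 1
    funext i
    rw [hy i, hdot_split i]; ring
  set q0 : ℝ := Real.sqrt (En n fun i => (σ * ε i + rr i) ^ 2) with hq0def
  have hq0 : 0 < q0 := Real.sqrt_pos.mpr hQ
  have hq0sq : q0 ^ 2 = En n fun i => (σ * ε i + rr i) ^ 2 := Real.sq_sqrt hQ.le
  set w : ℝ := En n fun i => (σ * ε i + rr i) * dot (x i) δ with hwdef
  -- gradient inequality
  have hgrad : q0 - Real.sqrt (Qhat n x y βh) ≤ w / q0 := by
    have hcs := En_CS n hn' (fun i => σ * ε i + rr i)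
      (fun i => (σ * ε i + rr i) - dot (x i) δ)
    have hexp : En n (fun i => (σ * ε i + rr i) * ((σ * ε i + rr i) - dot (x i) δ))
        = (En n fun i => (σ * ε i + rr i) ^ 2) - w := by
      rw [hwdef]
      unfold En
      rw [div_sub_div_same, ← Finset.sum_sub_distrib]
      congr 1
      exact Finset.sum_congr rfl fun i _ => by ring
    rw [hexp, ← hQh, ← hq0def] at hcs
    rw [le_div_iff₀ hq0]
    nlinarith [hcs, hq0sq]
  -- dual norm bound
  have hS : dot (score n x ε rr σ) δ = w / q0 := by
    rw [dot_score_eq, hwdef, hq0def]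
  have hsuple : ∀ j, |score n x ε rr σ j| ≤ scoreSup n x ε rr σ γ * γ j := by
    intro j
    have h1 : |score n x ε rr σ j| / γ j ≤ scoreSup n x ε rr σ γ := by
      unfold scoreSup
      exact le_ciSup (f := fun k => |score n x ε rr σ k| / γ k)
        (Set.Finite.bddAbove (Set.finite_range _)) j
    calc |score n x ε rr σ j| = |score n x ε rr σ j| / γ j * γ j :=
          (div_mul_cancel₀ _ (hγ0 j).ne').symm
      _ ≤ scoreSup n x ε rr σ γ * γ j :=
          mul_le_mul_of_nonneg_right h1 (hγ0 j).le
  have hdual : w / q0 ≤ scoreSup n x ε rr σ γ * l1 (scl γ δ) := by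
    rw [← hS]
    unfold dot
    calc ∑ j, score n x ε rr σ j * δ j
        ≤ ∑ j, scoreSup n x ε rr σ γ * (γ j * |δ j|) := by
          refine Finset.sum_le_sum fun j _ => ?_
          calc score n x ε rr σ j * δ j ≤ |score n x ε rr σ j * δ j| := le_abs_self _
            _ = |score n x ε rr σ j| * |δ j| := abs_mul _ _
            _ ≤ scoreSup n x ε rr σ γ * γ j * |δ j| :=
                mul_le_mul_of_nonneg_right (hsuple j) (abs_nonneg _)
            _ = scoreSup n x ε rr σ γ * (γ j * |δ j|) := by ring
      _ = scoreSup n x ε rr σ γ * l1 (scl γ δ) := by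
          rw [← Finset.mul_sum]
          congr 1
          unfold l1 scl
          exact (Finset.sum_congr rfl fun j _ => by
            rw [abs_mul, abs_of_pos (hγ0 j)]).symm
  have hl1δ_nonneg : 0 ≤ l1 (scl γ δ) := Finset.sum_nonneg fun j _ => abs_nonneg _
  -- basic inequality
  have hbasic := hmin β₀
  rw [hQ0, ← hq0def] at hbasic
  have hkey1 : lam / n * (l1 (scl γ βh) - l1 (scl γ β₀)) ≤
      scoreSup n x ε rr σ γ * l1 (scl γ δ) := by
    have := le_trans hgrad hdual
    nlinarith [this, hbasic]
  -- c * (l1 βh - l1 β₀) ≤ l1 δ  (after scaling by lam/n)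
  have hkey : c * (lam / n) * (l1 (scl γ βh) - l1 (scl γ β₀)) ≤ lam / n * l1 (scl γ δ) := by
    have h1 : c * (lam / n * (l1 (scl γ βh) - l1 (scl γ β₀))) ≤
        c * (scoreSup n x ε rr σ γ * l1 (scl γ δ)) :=
      mul_le_mul_of_nonneg_left hkey1 hc0.le
    have h2 : c * scoreSup n x ε rr σ γ * l1 (scl γ δ) ≤ lam / n * l1 (scl γ δ) :=
      mul_le_mul_of_nonneg_right hdom hl1δ_nonneg
    nlinarith [h1, h2]
  have hKI : c * (l1 (scl γ βh) - l1 (scl γ β₀)) ≤ l1 (scl γ δ) := by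
    have h3 : lam / n * (c * (l1 (scl γ βh) - l1 (scl γ β₀))) ≤ lam / n * l1 (scl γ δ) := by
      nlinarith [hkey]
    exact le_of_mul_le_mul_left h3 hL
  -- l1 decompositions
  set A : ℝ := ∑ j ∈ Tᶜ, |γ j * βh j| with hA
  set B : ℝ := ∑ j ∈ T, |γ j * (βh j - β₀ j)| with hB
  set P : ℝ := ∑ j ∈ T, |γ j * βh j| with hP
  have hsplit : ∀ v : Fin p → ℝ, l1 (scl γ v) =
      (∑ j ∈ T, |γ j * v j|) + ∑ j ∈ Tᶜ, |γ j * v j| := by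
    intro v
    unfold l1 scl
    rw [Finset.sum_add_sum_compl]
  have hgoalA : l1 (scl γ (restr Tᶜ βh)) = A := l1_scl_restr γ Tᶜ βh
  have hgoalB : l1 (scl γ (restr T βh - β₀)) = B := by
    unfold l1
    rw [hB, ← Finset.sum_add_sum_compl T]
    have h1 : ∀ j ∈ T, |scl γ (restr T βh - β₀) j| = |γ j * (βh j - β₀ j)| := by
      intro j hj
      unfold scl restr
      simp only [Pi.sub_apply, if_pos hj]
    have h2 : ∀ j ∈ Tᶜ, |scl γ (restr T βh - β₀) j| = 0 := by
      intro j hj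
      unfold scl restr
      simp only [Pi.sub_apply, if_neg (Finset.mem_compl.mp hj),
        hβ₀0 j (Finset.mem_compl.mp hj)]
      simp
    rw [Finset.sum_congr rfl h1, Finset.sum_congr rfl h2]
    simp
  have hl1βh : l1 (scl γ βh) = P + A := hsplit βh
  have hl1β₀ : l1 (scl γ β₀) = ∑ j ∈ T, |γ j * β₀ j| := by
    rw [hsplit β₀]
    have h2 : ∀ j ∈ Tᶜ, |γ j * β₀ j| = 0 := by
      intro j hj
      rw [hβ₀0 j (Finset.mem_compl.mp hj)]
      simp
    rw [Finset.sum_congr rfl h2]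
    simp
  have hl1δ : l1 (scl γ δ) = B + A := by
    rw [hsplit δ, hB, hA]
    congr 1
    refine Finset.sum_congr rfl fun j hj => ?_
    rw [hδ]
    simp only [hβ₀0 j (Finset.mem_compl.mp hj), sub_zero]
  -- triangle inequalities
  have htriT : l1 (scl γ β₀) ≤ P + B := by
    rw [hl1β₀, hP, hB, ← Finset.sum_add_distrib]
    refine Finset.sum_le_sum fun j _ => ?_
    have := abs_sub (γ j * βh j) (γ j * (βh j - β₀ j))
    have he : γ j * βh j - γ j * (βh j - β₀ j) = γ j * β₀ j := by ring
    rw [he] at this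
    exact this
  have htri : l1 (scl γ δ) ≤ l1 (scl γ βh) + l1 (scl γ β₀) := by
    unfold l1 scl
    rw [← Finset.sum_add_distrib]
    refine Finset.sum_le_sum fun j _ => ?_
    rw [hδ]
    have he : γ j * (βh j - β₀ j) = γ j * βh j - γ j * β₀ j := by ring
    rw [he]
    exact abs_sub _ _
  constructor
  · rw [hgoalA, hgoalB, div_mul_eq_mul_div, le_div_iff₀ (by linarith : (0:ℝ) < c - 1)]
    have h4 : c * (A - B) ≤ A + B := by
      have h5 : c * (l1 (scl γ βh) - l1 (scl γ β₀)) ≥ c * (A - B) := by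
        have : A - B ≤ l1 (scl γ βh) - l1 (scl γ β₀) := by
          rw [hl1βh]; linarith [htriT]
        exact mul_le_mul_of_nonneg_left this hc0.le
      rw [hl1δ] at hKI
      linarith
    linarith [h4]
  · rw [div_mul_eq_mul_div, le_div_iff₀ (by linarith : (0:ℝ) < c - 1)]
    have h4 : c * (l1 (scl γ βh) - l1 (scl γ β₀)) ≤ l1 (scl γ βh) + l1 (scl γ β₀) :=
      le_trans hKI htri
    linarith [h4]
end SqrtLasso
end

section
/- (Theorem 2, ℓ1-rate of convergence.) Let c > 1 and c̄ = (c+1)/(c−1), and suppose λ/n ≥ c‖Γ⁻¹S̃‖_∞ and κ_c̄ > 0. Then any square-root lasso minimizer β̂ satisfies ‖Γ(β̂ − β₀)‖₁ ≤ (1 + c̄)√s‖β̂ − β₀‖_{2,n}/κ_c̄. If moreover κ̃ > 0 and ρ̄ := λ√s/(nκ̃) < 1, then ‖Γ(β̂ − β₀)‖₁ ≤ (2(1 + c̄)√s/κ_c̄) · √Q̂(β₀) · (ϱ_c̄ + ρ̄)/(1 − ρ̄²). -/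
open Finset MeasureTheory ProbabilityTheory

namespace SqrtLasso

/-!
Write `δ = β̂ - β₀`, `a = √Q̂(β₀)` and `t = ‖δ‖_{2,n}`. The criterion is exactly quadratic,
`Q̂(β̂) = a² - 2a S̃'δ + t²`, and Cauchy–Schwarz gives `|S̃'δ| ≤ t`; together they yield the
first-order bound `a - S̃'δ ≤ √Q̂(β̂)`. Comparing `β̂` with `β₀` in the objective and using
`c |S̃'δ| ≤ (λ/n) ‖Γδ‖₁` puts `δ` in the cone `Δ_c̄` and `β̂` in the ball `‖Γβ‖₁ ≤ c̄ ‖Γβ₀‖₁`,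
so the restricted eigenvalue `κ_c̄` bounds `‖Γδ‖₁` by `(1 + c̄) √s t / κ_c̄`.
For the rate, the same comparison and `κ̃` give `√Q̂(β̂) - a ≤ ρ̄ t`, while `S̃'δ ≤ ϱ_c̄ t` because
`δ ∈ Δ_c̄` and `β̂` lies in that ball; substituted into the quadratic identity these give
`(1 - ρ̄²) t ≤ 2a (ϱ_c̄ + ρ̄)`.
-/

lemma le_div_mul_of_mul_abs_le {r c D u v : ℝ} (hr : 0 < r) (hc : 1 < c)
    (hD : c * |D| ≤ r * (u + v)) (h : r * v ≤ r * u + D) : v ≤ (c + 1) / (c - 1) * u := by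
  have hcD : c * D ≤ r * (u + v) :=
    (mul_le_mul_of_nonneg_left (le_abs_self D) (by linarith)).trans hD
  have hcv : c * (r * v) ≤ c * (r * u + D) := mul_le_mul_of_nonneg_left h (by linarith)
  rw [div_mul_eq_mul_div, le_div_iff₀ (by linarith)]
  refine le_of_mul_le_mul_left ?_ hr
  linarith

/- Applied with `a = √Q̂(β₀)`, `b = √Q̂(β̂)`, `t = ‖δ‖_{2,n}` and `D = S̃'δ`. -/
lemma le_div_of_sq_eq {a b t D ρ ϱ : ℝ} (ha : 0 ≤ a) (hb : 0 ≤ b) (ht : 0 ≤ t) (hρ : 0 ≤ ρ)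
    (hρ1 : ρ < 1) (hϱ : 0 ≤ ϱ) (h : b ^ 2 = a ^ 2 - 2 * a * D + t ^ 2) (hba : b - a ≤ ρ * t)
    (hD : D ≤ ϱ * t) : t ≤ 2 * a * (ϱ + ρ) / (1 - ρ ^ 2) := by
  have hsq : b ^ 2 - a ^ 2 ≤ ρ * t * (2 * a + ρ * t) := by
    have := mul_le_mul hba (show b + a ≤ 2 * a + ρ * t by linarith) (by linarith)
      (mul_nonneg hρ ht)
    nlinarith
  have hlin : t * ((1 - ρ ^ 2) * t) ≤ t * (2 * a * (ϱ + ρ)) := by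
    nlinarith [mul_le_mul_of_nonneg_left hD ha]
  rw [le_div_iff₀ (by nlinarith), mul_comm]
  rcases ht.eq_or_lt with rfl | ht
  · rw [mul_zero]; positivity
  · exact le_of_mul_le_mul_left hlin ht

section Norms

variable {p : ℕ}

lemma l1_nonneg (v : Fin p → ℝ) : 0 ≤ l1 v :=
  sum_nonneg fun _ _ => abs_nonneg _

lemma l1_scl_eq_add (γ v : Fin p → ℝ) (T : Finset (Fin p)) :
    l1 (scl γ v) = l1 (scl γ (restr T v)) + l1 (scl γ (restr Tᶜ v)) := by
  simp only [l1, scl, restr, ← sum_add_distrib]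
  refine sum_congr rfl fun j _ => ?_
  by_cases h : j ∈ T <;> simp [h]

lemma l1_scl_sub_le (γ u v : Fin p → ℝ) :
    l1 (scl γ (u - v)) ≤ l1 (scl γ u) + l1 (scl γ v) := by
  simp only [l1, scl, ← sum_add_distrib, Pi.sub_apply, mul_sub]
  exact sum_le_sum fun j _ => abs_sub _ _

lemma l1_scl_sub_l1_scl_le (γ : Fin p → ℝ) {T : Finset (Fin p)} {β₀ : Fin p → ℝ}
    (hβ₀ : ∀ j ∉ T, β₀ j = 0) (β : Fin p → ℝ) :
    l1 (scl γ β₀) - l1 (scl γ β) ≤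
      l1 (scl γ (restr T (β - β₀))) - l1 (scl γ (restr Tᶜ (β - β₀))) := by
  simp only [l1, scl, restr, ← sum_sub_distrib]
  refine sum_le_sum fun j _ => ?_
  by_cases hj : j ∈ T
  · have := abs_sub_abs_le_abs_sub (γ j * β₀ j) (γ j * β j)
    simpa [hj, mul_sub, abs_sub_comm] using this
  · simp [hj, hβ₀ j hj]

lemma abs_dot_le_iSup_mul_l1 (S : Fin p → ℝ) {γ : Fin p → ℝ} (hγ : ∀ j, 0 < γ j)
    (v : Fin p → ℝ) : |dot S v| ≤ (⨆ j, |S j| / γ j) * l1 (scl γ v) := by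
  have hbdd : BddAbove (Set.range fun j => |S j| / γ j) := (Set.finite_range _).bddAbove
  rw [l1, mul_sum]
  refine (abs_sum_le_sum_abs _ _).trans (sum_le_sum fun j _ => ?_)
  calc |S j * v j| = |S j| / γ j * |γ j * v j| := by
        rw [abs_mul, abs_mul, abs_of_pos (hγ j), div_mul_eq_mul_div, mul_div_assoc,
          mul_div_cancel_left₀ _ (hγ j).ne']
    _ ≤ _ := mul_le_mul_of_nonneg_right (le_ciSup hbdd j) (abs_nonneg _)

end Norms

section Empirical

variable {n : ℕ}

lemma En_sq_nonneg (f : Fin n → ℝ) : 0 ≤ En n fun i => f i ^ 2 :=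
  div_nonneg (sum_nonneg fun _ _ => sq_nonneg _) n.cast_nonneg

lemma abs_En_mul_le (f g : Fin n → ℝ) :
    |En n fun i => f i * g i| ≤ √(En n fun i => f i ^ 2) * √(En n fun i => g i ^ 2) := by
  rw [← Real.sqrt_mul (En_sq_nonneg f)]
  apply Real.abs_le_sqrt
  simp only [En, div_pow, div_mul_div_comm, ← sq]
  gcongr
  exact sum_mul_sq_le_sq_mul_sq _ _ _

variable {p : ℕ} (x : Fin n → Fin p → ℝ)

lemma predNorm_nonneg (δ : Fin p → ℝ) : 0 ≤ predNorm n x δ := Real.sqrt_nonneg _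

lemma Qhat_nonneg (y : Fin n → ℝ) (β : Fin p → ℝ) : 0 ≤ Qhat n x y β := En_sq_nonneg _

lemma predNorm_zero : predNorm n x 0 = 0 := by simp [predNorm, dot, En]

lemma dot_score (ε rr : Fin n → ℝ) (σ : ℝ) (δ : Fin p → ℝ) :
    dot (score n x ε rr σ) δ = (En n fun i => dot (x i) δ * (σ * ε i + rr i)) /
      √(En n fun i => (σ * ε i + rr i) ^ 2) := by
  simp only [dot, score, En, div_mul_eq_mul_div, ← sum_div, sum_mul]
  rw [sum_comm]
  congr 2
  exact sum_congr rfl fun i _ => sum_congr rfl fun j _ => by ring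

lemma abs_dot_score_le_predNorm (ε rr : Fin n → ℝ) (σ : ℝ) (δ : Fin p → ℝ) :
    |dot (score n x ε rr σ) δ| ≤ predNorm n x δ := by
  rw [dot_score, abs_div, abs_of_nonneg (Real.sqrt_nonneg _)]
  exact div_le_of_le_mul₀ (Real.sqrt_nonneg _) (predNorm_nonneg x δ) (abs_En_mul_le _ _)

end Empirical

section Model

variable {n p : ℕ} {x : Fin n → Fin p → ℝ} {β₀ : Fin p → ℝ} {y ε rr : Fin n → ℝ} {σ : ℝ}

lemma Qhat_eq_En (hy : ∀ i, y i = dot (x i) β₀ + (σ * ε i + rr i)) :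
    Qhat n x y β₀ = En n fun i => (σ * ε i + rr i) ^ 2 := by
  simp only [Qhat, hy, add_sub_cancel_left]

lemma Qhat_eq (hy : ∀ i, y i = dot (x i) β₀ + (σ * ε i + rr i)) (hQ : 0 < Qhat n x y β₀)
    (β : Fin p → ℝ) :
    Qhat n x y β = Qhat n x y β₀ - 2 * √(Qhat n x y β₀) * dot (score n x ε rr σ) (β - β₀) +
      predNorm n x (β - β₀) ^ 2 := by
  have hpt : ∀ i, (y i - dot (x i) β) ^ 2 = (σ * ε i + rr i) ^ 2 -
      2 * (dot (x i) (β - β₀) * (σ * ε i + rr i)) + dot (x i) (β - β₀) ^ 2 := by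
    intro i
    have : dot (x i) (β - β₀) = dot (x i) β - dot (x i) β₀ := by
      simp only [dot, Pi.sub_apply, mul_sub, sum_sub_distrib]
    rw [hy, this]; ring
  rw [dot_score, ← Qhat_eq_En hy, mul_assoc 2, mul_div_cancel₀ _ (Real.sqrt_pos.2 hQ).ne',
    predNorm, Real.sq_sqrt (En_sq_nonneg _), Qhat_eq_En hy]
  simp only [Qhat, En, hpt, sum_add_distrib, sum_sub_distrib, ← mul_sum]
  ring

lemma sqrt_Qhat_sub_dot_score_le (hy : ∀ i, y i = dot (x i) β₀ + (σ * ε i + rr i))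
    (hQ : 0 < Qhat n x y β₀) (β : Fin p → ℝ) :
    √(Qhat n x y β₀) - dot (score n x ε rr σ) (β - β₀) ≤ √(Qhat n x y β) := by
  have hβ := Qhat_eq hy hQ β
  have hD := abs_dot_score_le_predNorm x ε rr σ (β - β₀)
  nlinarith [Real.sq_sqrt (Qhat_nonneg x y β), Real.sq_sqrt hQ.le, Real.sqrt_nonneg (Qhat n x y β),
    sq_le_sq' (neg_le_of_abs_le hD) (le_of_abs_le hD)]

end Model

section RestrictedEigenvalues

variable {n p : ℕ} {x : Fin n → Fin p → ℝ} {γ : Fin p → ℝ} {T : Finset (Fin p)} {cb : ℝ}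

lemma kappa_le {δ : Fin p → ℝ} (hδ : δ ∈ Delta γ T cb) :
    kappa n x γ T cb ≤ √T.card * predNorm n x δ / l1 (scl γ (restr T δ)) := by
  refine csInf_le ⟨0, ?_⟩ ⟨δ, hδ, rfl⟩
  rintro r ⟨δ', -, rfl⟩
  exact div_nonneg (mul_nonneg (Real.sqrt_nonneg _) (predNorm_nonneg x δ')) (l1_nonneg _)

lemma l1_restr_le_of_kappa (hκ : 0 < kappa n x γ T cb) {δ : Fin p → ℝ}
    (hδ : l1 (scl γ (restr Tᶜ δ)) ≤ cb * l1 (scl γ (restr T δ))) :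
    l1 (scl γ (restr T δ)) ≤ √T.card * predNorm n x δ / kappa n x γ T cb := by
  have hrhs : 0 ≤ √T.card * predNorm n x δ / kappa n x γ T cb :=
    div_nonneg (mul_nonneg (Real.sqrt_nonneg _) (predNorm_nonneg x δ)) hκ.le
  rcases (l1_nonneg (scl γ (restr T δ))).eq_or_lt with hT | hT
  · exact hT ▸ hrhs
  have hδ0 : δ ≠ 0 := by
    rintro rfl
    simp [l1, scl, restr] at hT
  have := kappa_le (x := x) ⟨hδ0, hδ⟩
  rw [le_div_iff₀ hT] at this
  rwa [le_div_iff₀ hκ, mul_comm]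

lemma l1_scl_le_of_kappa (hcb : 0 ≤ cb) (hκ : 0 < kappa n x γ T cb) {δ : Fin p → ℝ}
    (hδ : l1 (scl γ (restr Tᶜ δ)) ≤ cb * l1 (scl γ (restr T δ))) :
    l1 (scl γ δ) ≤ (1 + cb) * √T.card * predNorm n x δ / kappa n x γ T cb := by
  rw [l1_scl_eq_add γ δ T, mul_assoc, mul_div_assoc]
  have := l1_restr_le_of_kappa hκ hδ
  nlinarith

lemma kappa_le_kappaTilde (hγ : ∀ j, γ j ≠ 0) (hT : T.Nonempty) (hcb : 1 ≤ cb) :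
    kappa n x γ T cb ≤ kappaTilde n x γ T := by
  obtain ⟨j₀, hj₀⟩ := hT
  refine le_csInf ⟨_, Pi.single j₀ 1, ?_, rfl⟩ ?_
  · simp [l1, scl, restr, Pi.single_apply, hj₀, apply_ite, hγ j₀]
  · rintro r ⟨δ, hlt, rfl⟩
    have hpos : 0 < l1 (scl γ (restr T δ)) := (l1_nonneg _).trans_lt hlt
    have hδ0 : δ ≠ 0 := by
      rintro rfl
      simp [l1, scl, restr] at hpos
    refine (kappa_le ⟨hδ0, ?_⟩).trans ?_
    · nlinarith
    · exact div_le_div_of_nonneg_left (mul_nonneg (Real.sqrt_nonneg _) (predNorm_nonneg x δ))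
        (sub_pos.2 hlt) (sub_le_self _ (l1_nonneg _))

lemma l1_restr_sub_le_of_kappaTilde (hκ : 0 < kappaTilde n x γ T) (δ : Fin p → ℝ) :
    l1 (scl γ (restr T δ)) - l1 (scl γ (restr Tᶜ δ)) ≤
      √T.card * predNorm n x δ / kappaTilde n x γ T := by
  have hrhs : 0 ≤ √T.card * predNorm n x δ / kappaTilde n x γ T :=
    div_nonneg (mul_nonneg (Real.sqrt_nonneg _) (predNorm_nonneg x δ)) hκ.le
  rcases le_or_gt (l1 (scl γ (restr T δ))) (l1 (scl γ (restr Tᶜ δ))) with hle | hlt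
  · linarith
  have hle : kappaTilde n x γ T ≤ √T.card * predNorm n x δ /
      (l1 (scl γ (restr T δ)) - l1 (scl γ (restr Tᶜ δ))) := by
    refine csInf_le ⟨0, ?_⟩ ⟨δ, hlt, rfl⟩
    rintro r ⟨δ', hlt', rfl⟩
    exact div_nonneg (mul_nonneg (Real.sqrt_nonneg _) (predNorm_nonneg x δ')) (by linarith)
  rw [le_div_iff₀ (sub_pos.2 hlt)] at hle
  rwa [le_div_iff₀ hκ, mul_comm]

variable {β₀ S : Fin p → ℝ}

lemma varrho_nonneg : 0 ≤ varrho n x γ T β₀ S cb := by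
  refine Real.sSup_nonneg ?_
  rintro r ⟨δ, -, hδ, -, rfl⟩
  exact div_nonneg (abs_nonneg _) hδ.le

lemma abs_dot_le_varrho_mul (hγ : ∀ j, 0 < γ j) (hcb : 0 ≤ cb) (hκ : 0 < kappa n x γ T cb)
    {δ : Fin p → ℝ} (hδ : δ ∈ Delta γ T cb) (ht : 0 < predNorm n x δ)
    (hβ : l1 (scl γ (δ + β₀)) ≤ cb * l1 (scl γ β₀)) :
    |dot S δ| ≤ varrho n x γ T β₀ S cb * predNorm n x δ := by
  set M := ⨆ j, |S j| / γ j
  have hM : 0 ≤ M := Real.iSup_nonneg fun j => div_nonneg (abs_nonneg _) (hγ j).le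
  have hbdd : BddAbove {r | ∃ δ ∈ Delta γ T cb, 0 < predNorm n x δ ∧
      l1 (scl γ (δ + β₀)) ≤ cb * l1 (scl γ β₀) ∧ r = |dot S δ| / predNorm n x δ} := by
    refine ⟨M * ((1 + cb) * √T.card / kappa n x γ T cb), ?_⟩
    rintro r ⟨δ', hδ', ht', -, rfl⟩
    rw [div_le_iff₀ ht']
    calc |dot S δ'| ≤ M * l1 (scl γ δ') := abs_dot_le_iSup_mul_l1 S hγ δ'
      _ ≤ M * ((1 + cb) * √T.card * predNorm n x δ' / kappa n x γ T cb) :=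
        mul_le_mul_of_nonneg_left (l1_scl_le_of_kappa hcb hκ hδ'.2) hM
      _ = _ := by ring
  rw [← div_le_iff₀ ht]
  exact le_csSup hbdd ⟨δ, hδ, ht, hβ, rfl⟩

end RestrictedEigenvalues

section Estimator

variable {n p : ℕ} {x : Fin n → Fin p → ℝ} {γ β₀ : Fin p → ℝ} {y ε rr : Fin n → ℝ} {σ : ℝ}

lemma sqrt_Qhat_sub_sqrt_Qhat_le {r : ℝ} (hr : 0 ≤ r) {T : Finset (Fin p)}
    (hβ₀ : ∀ j ∉ T, β₀ j = 0) {βh : Fin p → ℝ}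
    (hmin : ∀ β, √(Qhat n x y βh) + r * l1 (scl γ βh) ≤ √(Qhat n x y β) + r * l1 (scl γ β)) :
    √(Qhat n x y βh) - √(Qhat n x y β₀) ≤
      r * (l1 (scl γ (restr T (βh - β₀))) - l1 (scl γ (restr Tᶜ (βh - β₀)))) := by
  have := mul_le_mul_of_nonneg_left (l1_scl_sub_l1_scl_le γ hβ₀ βh) hr
  linarith [hmin β₀, mul_sub r (l1 (scl γ β₀)) (l1 (scl γ βh))]

lemma mul_abs_dot_score_le {c r : ℝ} (hγ : ∀ j, 0 < γ j) (hc : 0 ≤ c)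
    (hdom : c * scoreSup n x ε rr σ γ ≤ r) (v : Fin p → ℝ) :
    c * |dot (score n x ε rr σ) v| ≤ r * l1 (scl γ v) :=
  (mul_le_mul_of_nonneg_left (abs_dot_le_iSup_mul_l1 _ hγ v) hc).trans
    (by rw [← mul_assoc]; exact mul_le_mul_of_nonneg_right hdom (l1_nonneg _))

lemma l1_restr_compl_le_of_min (hy : ∀ i, y i = dot (x i) β₀ + (σ * ε i + rr i))
    (hQ : 0 < Qhat n x y β₀) (hγ : ∀ j, 0 < γ j) {r c : ℝ} (hr : 0 < r) (hc : 1 < c)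
    (hdom : c * scoreSup n x ε rr σ γ ≤ r) {T : Finset (Fin p)} (hβ₀ : ∀ j ∉ T, β₀ j = 0)
    {βh : Fin p → ℝ}
    (hmin : ∀ β, √(Qhat n x y βh) + r * l1 (scl γ βh) ≤ √(Qhat n x y β) + r * l1 (scl γ β)) :
    l1 (scl γ (restr Tᶜ (βh - β₀))) ≤ (c + 1) / (c - 1) * l1 (scl γ (restr T (βh - β₀))) := by
  have hfo := sqrt_Qhat_sub_dot_score_le hy hQ βh
  have hbasic := sqrt_Qhat_sub_sqrt_Qhat_le hr.le hβ₀ hmin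
  rw [mul_sub] at hbasic
  refine le_div_mul_of_mul_abs_le (D := dot (score n x ε rr σ) (βh - β₀)) hr hc ?_ (by linarith)
  rw [← l1_scl_eq_add]
  exact mul_abs_dot_score_le hγ (by linarith) hdom _

lemma l1_scl_le_of_min (hy : ∀ i, y i = dot (x i) β₀ + (σ * ε i + rr i))
    (hQ : 0 < Qhat n x y β₀) (hγ : ∀ j, 0 < γ j) {r c : ℝ} (hr : 0 < r) (hc : 1 < c)
    (hdom : c * scoreSup n x ε rr σ γ ≤ r) {βh : Fin p → ℝ}
    (hmin : ∀ β, √(Qhat n x y βh) + r * l1 (scl γ βh) ≤ √(Qhat n x y β) + r * l1 (scl γ β)) :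
    l1 (scl γ βh) ≤ (c + 1) / (c - 1) * l1 (scl γ β₀) := by
  have hfo := sqrt_Qhat_sub_dot_score_le hy hQ βh
  refine le_div_mul_of_mul_abs_le (D := dot (score n x ε rr σ) (βh - β₀)) hr hc ?_
    (by linarith [hmin β₀])
  refine (mul_abs_dot_score_le hγ (by linarith) hdom _).trans ?_
  exact mul_le_mul_of_nonneg_left ((l1_scl_sub_le γ βh β₀).trans_eq (add_comm _ _)) hr.le

lemma dot_score_le_varrho_mul {T : Finset (Fin p)} {cb : ℝ} (hγ : ∀ j, 0 < γ j)
    (hcb : 0 ≤ cb) (hκ : 0 < kappa n x γ T cb) {δ : Fin p → ℝ}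
    (hδ : l1 (scl γ (restr Tᶜ δ)) ≤ cb * l1 (scl γ (restr T δ)))
    (hβ : l1 (scl γ (δ + β₀)) ≤ cb * l1 (scl γ β₀)) :
    dot (score n x ε rr σ) δ ≤ varrho n x γ T β₀ (score n x ε rr σ) cb * predNorm n x δ := by
  refine (le_abs_self _).trans ?_
  rcases (predNorm_nonneg x δ).eq_or_lt with ht | ht
  · have := abs_dot_score_le_predNorm x ε rr σ δ
    rw [← ht] at this ⊢
    rwa [mul_zero]
  have hδ0 : δ ≠ 0 := fun h => ht.ne' (h ▸ predNorm_zero x)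
  exact abs_dot_le_varrho_mul hγ hcb hκ ⟨hδ0, hδ⟩ ht hβ

end Estimator

theorem statement_6_general (n p : ℕ) (hn : 1 ≤ n)
    (x : Fin n → Fin p → ℝ) (β₀ γ : Fin p → ℝ) (hγ : ∀ j, 1 ≤ γ j)
    (hs : 1 ≤ (supp β₀).card)
    (σ : ℝ) (ε rr : Fin n → ℝ) (y : Fin n → ℝ)
    (hy : ∀ i, y i = dot (x i) β₀ + σ * ε i + rr i)
    (hQ : 0 < En n fun i => (σ * ε i + rr i) ^ 2)
    (lam : ℝ) (hlam : 0 < lam)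
    (c : ℝ) (hc : 1 < c)
    (hdom : c * scoreSup n x ε rr σ γ ≤ lam / n)
    (βh : Fin p → ℝ)
    (hmin : ∀ β : Fin p → ℝ,
      Real.sqrt (Qhat n x y βh) + lam / n * l1 (scl γ βh) ≤
        Real.sqrt (Qhat n x y β) + lam / n * l1 (scl γ β))
    (hκ : 0 < kappa n x γ (supp β₀) ((c + 1) / (c - 1))) :
    l1 (scl γ (βh - β₀)) ≤
        (1 + (c + 1) / (c - 1)) * Real.sqrt (supp β₀).card * predNorm n x (βh - β₀) /
          kappa n x γ (supp β₀) ((c + 1) / (c - 1)) ∧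
      (∀ ρ : ℝ,
        ρ = lam * Real.sqrt (supp β₀).card / (n * kappaTilde n x γ (supp β₀)) → ρ < 1 →
        l1 (scl γ (βh - β₀)) ≤
          2 * (1 + (c + 1) / (c - 1)) * Real.sqrt (supp β₀).card /
              kappa n x γ (supp β₀) ((c + 1) / (c - 1)) *
            Real.sqrt (Qhat n x y β₀) *
            ((varrho n x γ (supp β₀) β₀ (score n x ε rr σ) ((c + 1) / (c - 1)) + ρ) /
              (1 - ρ ^ 2))) := by
  set T := supp β₀
  set cb := (c + 1) / (c - 1) with hcb
  set δ := βh - β₀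
  have hγ0 : ∀ j, 0 < γ j := fun j => one_pos.trans_le (hγ j)
  have hcb1 : 1 ≤ cb := by rw [hcb, one_le_div (by linarith)]; linarith
  have hr : 0 < lam / n := div_pos hlam (by exact_mod_cast hn)
  have hy' : ∀ i, y i = dot (x i) β₀ + (σ * ε i + rr i) := fun i => by rw [hy, add_assoc]
  have hQ' : 0 < Qhat n x y β₀ := Qhat_eq_En hy' ▸ hQ
  have hβ₀ : ∀ j ∉ T, β₀ j = 0 := fun j hj => by simpa [T, supp] using hj
  have hcone := l1_restr_compl_le_of_min hy' hQ' hγ0 hr hc hdom hβ₀ hmin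
  have hpart1 := l1_scl_le_of_kappa (by linarith) hκ hcone
  refine ⟨hpart1, fun ρ hρ hρ1 => ?_⟩
  have hκt : 0 < kappaTilde n x γ T :=
    hκ.trans_le (kappa_le_kappaTilde (fun j => (hγ0 j).ne') (card_pos.1 hs) hcb1)
  have hba : √(Qhat n x y βh) - √(Qhat n x y β₀) ≤ ρ * predNorm n x δ := by
    refine (sqrt_Qhat_sub_sqrt_Qhat_le hr.le hβ₀ hmin).trans ((mul_le_mul_of_nonneg_left
      (l1_restr_sub_le_of_kappaTilde hκt δ) hr.le).trans_eq ?_)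
    rw [hρ]; ring
  have hsq : √(Qhat n x y βh) ^ 2 = √(Qhat n x y β₀) ^ 2 -
      2 * √(Qhat n x y β₀) * dot (score n x ε rr σ) δ + predNorm n x δ ^ 2 := by
    rw [Real.sq_sqrt (Qhat_nonneg x y βh), Real.sq_sqrt hQ'.le]
    exact Qhat_eq hy' hQ' βh
  have hβh : l1 (scl γ (δ + β₀)) ≤ cb * l1 (scl γ β₀) :=
    (sub_add_cancel βh β₀).symm ▸ l1_scl_le_of_min hy' hQ' hγ0 hr hc hdom hmin
  have hrate := le_div_of_sq_eq (Real.sqrt_nonneg _) (Real.sqrt_nonneg _) (predNorm_nonneg x δ)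
    (hρ ▸ by positivity) hρ1 varrho_nonneg hsq hba
    (dot_score_le_varrho_mul hγ0 (by linarith) hκ hcone hβh)
  calc l1 (scl γ δ) ≤ (1 + cb) * √T.card / kappa n x γ T cb * predNorm n x δ :=
        hpart1.trans_eq (by ring)
    _ ≤ (1 + cb) * √T.card / kappa n x γ T cb *
        (2 * √(Qhat n x y β₀) * (varrho n x γ T β₀ (score n x ε rr σ) cb + ρ) / (1 - ρ ^ 2)) :=
      mul_le_mul_of_nonneg_left hrate (div_nonneg (by positivity) hκ.le)
    _ = _ := by ring

/-- Theorem 2, ℓ₁-rate of convergence. -/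
theorem statement_6 (n p : ℕ) (hn : 1 ≤ n) (hp : 1 ≤ p)
    (x : Fin n → Fin p → ℝ) (β₀ γ : Fin p → ℝ) (hγ : ∀ j, 1 ≤ γ j)
    (hs : 1 ≤ (supp β₀).card)
    (σ : ℝ) (hσ : 0 ≤ σ) (ε rr : Fin n → ℝ) (y : Fin n → ℝ)
    (hy : ∀ i, y i = dot (x i) β₀ + σ * ε i + rr i)
    (hQ : 0 < En n fun i => (σ * ε i + rr i) ^ 2)
    (lam : ℝ) (hlam : 0 < lam)
    (c : ℝ) (hc : 1 < c)
    (hdom : c * scoreSup n x ε rr σ γ ≤ lam / n)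
    (βh : Fin p → ℝ)
    (hmin : ∀ β : Fin p → ℝ,
      Real.sqrt (Qhat n x y βh) + lam / n * l1 (scl γ βh) ≤
        Real.sqrt (Qhat n x y β) + lam / n * l1 (scl γ β))
    (hκ : 0 < kappa n x γ (supp β₀) ((c + 1) / (c - 1))) :
    l1 (scl γ (βh - β₀)) ≤
        (1 + (c + 1) / (c - 1)) * Real.sqrt (supp β₀).card * predNorm n x (βh - β₀) /
          kappa n x γ (supp β₀) ((c + 1) / (c - 1)) ∧
      (∀ ρ : ℝ,
        ρ = lam * Real.sqrt (supp β₀).card / (n * kappaTilde n x γ (supp β₀)) → ρ < 1 →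
        l1 (scl γ (βh - β₀)) ≤
          2 * (1 + (c + 1) / (c - 1)) * Real.sqrt (supp β₀).card /
              kappa n x γ (supp β₀) ((c + 1) / (c - 1)) *
            Real.sqrt (Qhat n x y β₀) *
            ((varrho n x γ (supp β₀) β₀ (score n x ε rr σ) ((c + 1) / (c - 1)) + ρ) /
              (1 - ρ ^ 2))) :=
  statement_6_general n p hn x β₀ γ hγ hs σ ε rr y hy hQ lam hlam c hc hdom βh hmin hκ

end SqrtLasso
end

section
/- (Lemma on the score of the oracle target.) Let f_1,…,f_n ∈ ℝ, σ > 0, and suppose β₀ ∈ ℝ^p minimizes β ↦ E_n[(f_i − x_i'β)²] + σ²‖β‖₀/n over ℝ^p, where ‖β‖₀ is the number of nonzero entries of β. Set r_i = f_i − x_i'β₀ and c_s = (E_n[r_i²])^{1/2}, and assume E_n[x_{ij}²] = 1 for every j = 1,…,p. Then max_{1≤j≤p} |E_n[x_{ij}r_i]| ≤ min{σ/√n, c_s}. -/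
open Finset MeasureTheory ProbabilityTheory

namespace SqrtLasso

/-!
Cauchy–Schwarz bounds the score `a = E_n[x_{ij} r_i]` by `c_s`. For the other bound, move `β₀`
by `a` along the `j`-th axis: since `E_n[x_{ij}²] = 1` the fit `E_n[(f_i - x_i'β)²]` drops by
exactly `a²`, while `‖β‖₀` grows by at most one, so minimality of `β₀` forces `a² ≤ σ² / n`.
-/

theorem sq_En_mul_le (n : ℕ) (u v : Fin n → ℝ) :
    (En n fun i => u i * v i) ^ 2 ≤ (En n fun i => u i ^ 2) * En n fun i => v i ^ 2 := by
  simp only [En, div_pow, div_mul_div_comm, ← sq]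
  gcongr
  exact Finset.sum_mul_sq_le_sq_mul_sq _ u v

theorem En_sub_mul_sq (n : ℕ) (r u : Fin n → ℝ) (t : ℝ) :
    (En n fun i => (r i - t * u i) ^ 2) = (En n fun i => r i ^ 2)
      - 2 * t * (En n fun i => u i * r i) + t ^ 2 * En n fun i => u i ^ 2 := by
  have hsum : ∑ i, (r i - t * u i) ^ 2
      = ∑ i, r i ^ 2 - 2 * t * ∑ i, u i * r i + t ^ 2 * ∑ i, u i ^ 2 := by
    rw [Finset.mul_sum, Finset.mul_sum, ← Finset.sum_sub_distrib, ← Finset.sum_add_distrib]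
    exact Finset.sum_congr rfl fun i _ => by ring
  simp only [En, hsum]
  ring

theorem dot_add_single {p : ℕ} (a β : Fin p → ℝ) (j : Fin p) (t : ℝ) :
    dot a (β + Pi.single j t) = dot a β + a j * t :=
  show a ⬝ᵥ (β + Pi.single j t) = a ⬝ᵥ β + a j * t by
    rw [dotProduct_add, dotProduct_single]

theorem card_supp_add_single_le {p : ℕ} (β : Fin p → ℝ) (j : Fin p) (t : ℝ) :
    (supp (β + Pi.single j t)).card ≤ (supp β).card + 1 := by
  calc (supp (β + Pi.single j t)).card ≤ (insert j (supp β)).card := by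
        refine card_le_card fun k hk => ?_
        by_cases hkj : k = j
        · exact hkj ▸ mem_insert_self k _
        · simpa [supp, Pi.single_apply, hkj] using hk
    _ ≤ (supp β).card + 1 := card_insert_le _ _

theorem Qhat_add_single (n : ℕ) {p : ℕ} (x : Fin n → Fin p → ℝ) (y : Fin n → ℝ)
    (β : Fin p → ℝ) (j : Fin p) (t : ℝ) :
    Qhat n x y (β + Pi.single j t) = Qhat n x y β
      - 2 * t * (En n fun i => x i j * (y i - dot (x i) β)) + t ^ 2 * En n fun i => x i j ^ 2 := by
  rw [Qhat, Qhat, ← En_sub_mul_sq]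
  congr 1
  funext i
  rw [dot_add_single]
  ring

theorem sq_En_mul_residual_le_of_isMinOn {n p : ℕ} {x : Fin n → Fin p → ℝ} {y : Fin n → ℝ}
    {c : ℝ} {β₀ : Fin p → ℝ}
    (hmin : IsMinOn (fun β => Qhat n x y β + c * (supp β).card) Set.univ β₀) (hc : 0 ≤ c)
    (j : Fin p) (hs : 0 < En n fun i => x i j ^ 2) :
    (En n fun i => x i j * (y i - dot (x i) β₀)) ^ 2 ≤ c * En n fun i => x i j ^ 2 := by
  set s := En n fun i => x i j ^ 2
  set a := En n fun i => x i j * (y i - dot (x i) β₀)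
  have hstep := isMinOn_univ_iff.1 hmin (β₀ + Pi.single j (a / s))
  have hcard : c * (supp (β₀ + Pi.single j (a / s))).card ≤ c * ((supp β₀).card + 1) := by
    gcongr
    exact_mod_cast card_supp_add_single_le β₀ j (a / s)
  have hdecrease : -2 * (a / s) * a + (a / s) ^ 2 * s = -(a ^ 2 / s) := by
    field_simp
    ring
  simp only [Qhat_add_single] at hstep
  rw [← div_le_iff₀ hs]
  linarith

theorem statement_13_general (n p : ℕ)
    (x : Fin n → Fin p → ℝ) (f : Fin n → ℝ) (σ : ℝ) (hσ : 0 < σ)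
    (β₀ : Fin p → ℝ)
    (horacle : ∀ β : Fin p → ℝ,
      En n (fun i => (f i - dot (x i) β₀) ^ 2) + σ ^ 2 * (supp β₀).card / n ≤
        En n (fun i => (f i - dot (x i) β) ^ 2) + σ ^ 2 * (supp β).card / n)
    (hnorm : ∀ j, En n (fun i => x i j ^ 2) = 1) :
    ∀ j, |En n fun i => x i j * (f i - dot (x i) β₀)| ≤
      min (σ / Real.sqrt n) (Real.sqrt (En n fun i => (f i - dot (x i) β₀) ^ 2)) := by
  intro j
  have hmin : IsMinOn (fun β => Qhat n x f β + σ ^ 2 / n * (supp β).card) Set.univ β₀ :=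
    isMinOn_univ_iff.2 fun β => by simpa only [Qhat, mul_div_right_comm] using horacle β
  have hsparse := sq_En_mul_residual_le_of_isMinOn hmin (by positivity) j (by simp [hnorm j])
  have hcs := sq_En_mul_le n (fun i => x i j) fun i => f i - dot (x i) β₀
  rw [hnorm j, mul_one] at hsparse
  rw [hnorm j, one_mul] at hcs
  refine le_min ?_ (Real.abs_le_sqrt hcs)
  calc _ ≤ √(σ ^ 2 / n) := Real.abs_le_sqrt hsparse
    _ = σ / √n := by rw [Real.sqrt_div' _ n.cast_nonneg, Real.sqrt_sq hσ.le]

/-- the score of the oracle target satisfies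
`max_j |E_n[x_{ij} r_i]| ≤ min { σ/√n, c_s }`. -/
theorem statement_13 (n p : ℕ) (hn : 1 ≤ n) (hp : 1 ≤ p)
    (x : Fin n → Fin p → ℝ) (f : Fin n → ℝ) (σ : ℝ) (hσ : 0 < σ)
    (β₀ : Fin p → ℝ)
    (horacle : ∀ β : Fin p → ℝ,
      En n (fun i => (f i - dot (x i) β₀) ^ 2) + σ ^ 2 * (supp β₀).card / n ≤
        En n (fun i => (f i - dot (x i) β) ^ 2) + σ ^ 2 * (supp β).card / n)
    (hnorm : ∀ j, En n (fun i => x i j ^ 2) = 1) :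
    ∀ j, |En n fun i => x i j * (f i - dot (x i) β₀)| ≤
      min (σ / Real.sqrt n) (Real.sqrt (En n fun i => (f i - dot (x i) β₀) ^ 2)) :=
  statement_13_general n p x f σ hσ β₀ horacle hnorm

end SqrtLasso
end
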